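/- Semantic soundness of the sequential composition rule for box: Let S be a type (of states). For all sets T₁, T₂ of traces over S and every set V of states, box(T₁ ∘ T₂, V) = box(T₁, box(T₂, V)). -/

import Mathlib

/-- A trace over a type `S` of states is a nonempty finite list of elements of `S`. -/
def Trace (S : Type*) := {l : List S // l ≠ []}

namespace Trace

variable {S : Type*}

/-- The head (first element) of a trace. -/
def head (t : Trace S) : S := t.1.head t.2

/-- The last element of a trace. -/
def last (t : Trace S) : S := t.1.getLast t.2

/-- Fusion of two traces: `t₁ ∘ t₂ = t₁ ++ tail t₂` (meaningful when `last t₁ = head t₂`). -/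
def fuse (t₁ t₂ : Trace S) : Trace S :=
  ⟨t₁.1 ++ t₂.1.tail, by simp [t₁.2]⟩

end Trace

variable {S : Type*}

/-- Fusion product of two sets of traces. -/
def fprod (T₁ T₂ : Set (Trace S)) : Set (Trace S) :=
  {t | ∃ t₁ ∈ T₁, ∃ t₂ ∈ T₂, t₁.last = t₂.head ∧ t = t₁.fuse t₂}

/-- The set `I` of all length-1 traces `[s]`, `s ∈ S`. -/
def unitTraces (S : Type*) : Set (Trace S) := {t | ∃ s : S, t.1 = [s]}

/-- Powers of a set of traces under the fusion product: `T⁰ = I`, `Tⁿ⁺¹ = T ∘ Tⁿ`. -/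
def fpow (T : Set (Trace S)) : ℕ → Set (Trace S)
  | 0 => unitTraces S
  | n + 1 => fprod T (fpow T n)

/-- Star of a set of traces under the fusion product: `T* = ⋃ n, Tⁿ`. -/
def fstar (T : Set (Trace S)) : Set (Trace S) := ⋃ n, fpow T n

/-- `box T V`: states from which every trace of `T` ends in `V`. -/
def box (T : Set (Trace S)) (V : Set S) : Set S :=
  {s | ∀ t ∈ T, t.head = s → t.last ∈ V}

/-- `diamond T V`: states from which some trace of `T` ends in `V`. -/
def diamond (T : Set (Trace S)) (V : Set S) : Set S :=
  {s | ∃ t ∈ T, t.head = s ∧ t.last ∈ V}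

/-- `boxAlways T V`: states from which every trace of `T` lies entirely in `V`. -/
def boxAlways (T : Set (Trace S)) (V : Set S) : Set S :=
  {s | ∀ t ∈ T, t.head = s → ∀ x ∈ t.1, x ∈ V}

namespace Trace

variable {S : Type*}

lemma head_fuse (t₁ t₂ : Trace S) : (t₁.fuse t₂).head = t₁.head := by
  obtain ⟨_ | _, _⟩ := t₁
  · contradiction
  · rfl

lemma last_fuse {t₁ t₂ : Trace S} (h : t₁.last = t₂.head) : (t₁.fuse t₂).last = t₂.last := by
  obtain ⟨_ | ⟨a, l⟩, hl₂⟩ := t₂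
  · contradiction
  rcases l with _ | ⟨b, l⟩
  -- for a one-state `t₂` the fusion is `t₁` itself, whose last state is `t₂.head` by `h`
  · simpa [fuse, last, head] using h
  · simp [fuse, last]

end Trace

/-- semantic soundness of the sequential composition rule for box. -/
theorem box_fprod {S : Type*} (T₁ T₂ : Set (Trace S)) (V : Set S) :
    box (fprod T₁ T₂) V = box T₁ (box T₂ V) := by
  ext s
  constructor
  · intro hs t₁ h₁ hs₁ t₂ h₂ hlink
    have hfused := hs _ ⟨t₁, h₁, t₂, h₂, hlink.symm, rfl⟩ (by rw [Trace.head_fuse, hs₁])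
    rwa [Trace.last_fuse hlink.symm] at hfused
  · rintro hs _ ⟨t₁, h₁, t₂, h₂, hlink, rfl⟩ hs₁
    rw [Trace.last_fuse hlink]
    exact hs t₁ h₁ (by rwa [← Trace.head_fuse t₁ t₂]) t₂ h₂ hlink.symm
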